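/- arXiv:1805.03701 — 2 statements merged into one kernel-verified Lean document; each statement's English description precedes it below -/
import Mathlib

section
/- Let 0 < θ₁ < θ₂ < π/2, and fix the coordinate quadrant structure on ℝ². For any two nonzero vectors f₁, f₂ ∈ ℝ² not lying on the coordinate axes, there exists k ∈ ℕ such that R(kθ₁)f₁ and R(kθ₂)f₂ lie in the same open quadrant or in diametrically opposite open quadrants. -/
open Real

/-- `z` and `w` lie in the same open quadrant of `ℝ² ≃ ℂ` or in diametrically
opposite ones. -/
def SameOrOppositeQuadrant (z w : ℂ) : Prop :=
  (0 < z.re * w.re ∧ 0 < z.im * w.im) ∨ (z.re * w.re < 0 ∧ z.im * w.im < 0)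

/-!
Doubling all angles, `z` and `w` are in the same or in opposite quadrants exactly when
`Im (z²) · Im (w²) > 0`, and the doubled vectors rotate by angles `0 < φ₁ < φ₂ < π`. For
`z_k = A ζ₁^k`, `w_k = B ζ₂^k` the sequence `g_k = Im z_k · Im w_k` is a combination of
oscillating terms `Re (c ζ^k)` with `ζ ≠ 1`, so its partial sums are bounded, whereas `g_k²`
is at least `|A|²|B|²/8` plus such oscillating terms. If `g_k ≤ 0` for all `k`, then
`g_k² ≤ -M g_k`, where `|g_k| ≤ M`, would make the partial sums of `g_k²` bounded as well, which is absurd.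
-/

open Finset Complex ComplexConjugate

def HasBoundedPartialSums (u : ℕ → ℝ) : Prop :=
  ∃ C, ∀ N, |∑ k ∈ range N, u k| ≤ C

namespace HasBoundedPartialSums

variable {u v : ℕ → ℝ}

lemma sub (hu : HasBoundedPartialSums u) (hv : HasBoundedPartialSums v) :
    HasBoundedPartialSums fun k => u k - v k := by
  obtain ⟨C, hC⟩ := hu
  obtain ⟨D, hD⟩ := hv
  refine ⟨C + D, fun N => ?_⟩
  rw [sum_sub_distrib]
  exact (abs_sub _ _).trans (add_le_add (hC N) (hD N))

lemma const_mul (hu : HasBoundedPartialSums u) (a : ℝ) :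
    HasBoundedPartialSums fun k => a * u k := by
  obtain ⟨C, hC⟩ := hu
  refine ⟨|a| * C, fun N => ?_⟩
  rw [← mul_sum, abs_mul]
  exact mul_le_mul_of_nonneg_left (hC N) (abs_nonneg a)

lemma div_const (hu : HasBoundedPartialSums u) (a : ℝ) :
    HasBoundedPartialSums fun k => u k / a := by
  simpa only [div_eq_inv_mul] using hu.const_mul a⁻¹

lemma exists_pos_of_add_le_sq (hu : HasBoundedPartialSums u) {M : ℝ} (hM : ∀ k, |u k| ≤ M)
    (hv : HasBoundedPartialSums v) {c : ℝ} (hc : 0 < c) (hsq : ∀ k, c + v k ≤ u k ^ 2) :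
    ∃ k, 0 < u k := by
  by_contra! hnonpos
  obtain ⟨C, hC⟩ := hu
  obtain ⟨D, hD⟩ := hv
  have hM0 : 0 ≤ M := (abs_nonneg _).trans (hM 0)
  have hle : ∀ k, c + v k ≤ M * -u k := fun k => by
    have hneg : 0 ≤ -u k := neg_nonneg.2 (hnonpos k)
    have hbound : -u k ≤ M := abs_of_nonpos (hnonpos k) ▸ hM k
    calc c + v k ≤ u k ^ 2 := hsq k
      _ = -u k * -u k := by ring
      _ ≤ M * -u k := mul_le_mul_of_nonneg_right hbound hneg
  have hlinear : ∀ N : ℕ, N * c ≤ M * C + D := fun N => by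
    have hsum : N * c + ∑ k ∈ range N, v k ≤ M * -∑ k ∈ range N, u k := by
      simpa [sum_add_distrib, mul_sum] using sum_le_sum fun k (_ : k ∈ range N) => hle k
    have hu' := mul_le_mul_of_nonneg_left ((neg_le_abs _).trans (hC N)) hM0
    linarith [(neg_le_abs _).trans (hD N)]
  obtain ⟨N, hN⟩ := exists_nat_gt ((M * C + D) / c)
  linarith [hlinear N, (div_lt_iff₀ hc).1 hN]

end HasBoundedPartialSums

lemma hasBoundedPartialSums_re_mul_pow (c : ℂ) {ζ : ℂ} (hζ : ‖ζ‖ ≤ 1) (hζ1 : ζ ≠ 1) :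
    HasBoundedPartialSums fun k => (c * ζ ^ k).re := by
  refine ⟨‖c‖ * (2 / ‖ζ - 1‖), fun N => ?_⟩
  have hpow : ‖ζ ^ N - 1‖ ≤ 2 := by
    calc ‖ζ ^ N - 1‖ ≤ ‖ζ ^ N‖ + ‖(1 : ℂ)‖ := norm_sub_le _ _
      _ ≤ 1 + 1 := by
        rw [norm_pow, norm_one]
        gcongr
        exact pow_le_one₀ (norm_nonneg _) hζ
      _ = 2 := by norm_num
  calc |∑ k ∈ range N, (c * ζ ^ k).re| = |(c * ∑ k ∈ range N, ζ ^ k).re| := by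
        rw [mul_sum, re_sum]
    _ ≤ ‖c * ∑ k ∈ range N, ζ ^ k‖ := abs_re_le_norm _
    _ ≤ ‖c‖ * (2 / ‖ζ - 1‖) := by
        rw [norm_mul, geom_sum_eq hζ1, norm_div]
        gcongr

lemma mul_conj_ne_one {a b : ℂ} (hb : ‖b‖ = 1) (hab : a ≠ b) : a * conj b ≠ 1 := by
  have hb0 : b ≠ 0 := norm_ne_zero_iff.1 (by rw [hb]; exact one_ne_zero)
  have hconj : conj b = b⁻¹ := by
    rw [Complex.inv_def, normSq_eq_norm_sq, hb]
    simp
  rw [hconj, Ne, mul_inv_eq_one₀ hb0]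
  exact hab

lemma im_mul_im_eq (z w : ℂ) : z.im * w.im = ((z * conj w).re - (z * w).re) / 2 := by
  simp only [mul_re, conj_re, conj_im]
  ring

/-- From `Im² z = (|z|² - Re z²)/2` and `Re z² · Re w² = (Re (z²w²) + Re (z² · conj w²))/2`,
bounding `Re (z²w²) ≥ -|z|²|w|²`. -/
lemma sq_im_mul_im_ge (z w : ℂ) :
    (normSq z * normSq w + (z ^ 2 * conj (w ^ 2)).re - 2 * normSq z * (w ^ 2).re
      - 2 * normSq w * (z ^ 2).re) / 8 ≤ (z.im * w.im) ^ 2 := by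
  have hid : (z.im * w.im) ^ 2 - (normSq z * normSq w + (z ^ 2 * conj (w ^ 2)).re
      - 2 * normSq z * (w ^ 2).re - 2 * normSq w * (z ^ 2).re) / 8
      = (normSq z * normSq w + (z ^ 2 * w ^ 2).re) / 8 := by
    simp only [normSq_apply, sq, mul_re, mul_im, conj_re, conj_im]
    ring
  have hbound : -(normSq z * normSq w) ≤ (z ^ 2 * w ^ 2).re := by
    have : ‖z ^ 2 * w ^ 2‖ = normSq z * normSq w := by
      rw [norm_mul, norm_pow, norm_pow, normSq_eq_norm_sq, normSq_eq_norm_sq]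
    exact this ▸ neg_le_of_abs_le (abs_re_le_norm _)
  linarith

lemma normSq_mul_pow_of_norm_eq_one (A : ℂ) {ζ : ℂ} (hζ : ‖ζ‖ = 1) (k : ℕ) :
    normSq (A * ζ ^ k) = normSq A := by
  rw [normSq_mul, map_pow, normSq_eq_norm_sq ζ, hζ]
  simp

lemma exists_im_mul_im_pos {ζ₁ ζ₂ : ℂ} (h₁ : ‖ζ₁‖ = 1) (h₂ : ‖ζ₂‖ = 1) (h₁₁ : ζ₁ ^ 2 ≠ 1)
    (h₂₂ : ζ₂ ^ 2 ≠ 1) (h₁₂ : ζ₁ ^ 2 ≠ ζ₂ ^ 2) (h₁₂' : ζ₁ * ζ₂ ≠ 1) {A B : ℂ} (hA : A ≠ 0)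
    (hB : B ≠ 0) : ∃ k : ℕ, 0 < (A * ζ₁ ^ k).im * (B * ζ₂ ^ k).im := by
  have hsq₁ : ‖ζ₁ ^ 2‖ ≤ 1 := by rw [norm_pow, h₁, one_pow]
  have hsq₂ : ‖ζ₂ ^ 2‖ ≤ 1 := by rw [norm_pow, h₂, one_pow]
  have hsum : HasBoundedPartialSums fun k => (A * ζ₁ ^ k).im * (B * ζ₂ ^ k).im := by
    have := ((hasBoundedPartialSums_re_mul_pow (A * conj B) (ζ := ζ₁ * conj ζ₂)
      (by simp [h₁, h₂]) (mul_conj_ne_one h₂ fun h => h₁₂ (h ▸ rfl))).sub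
      (hasBoundedPartialSums_re_mul_pow (A * B) (ζ := ζ₁ * ζ₂)
      (by simp [h₁, h₂]) h₁₂')).div_const 2
    convert this using 2 with k
    rw [im_mul_im_eq, map_mul, map_pow]
    ring_nf
  have hosc := (((hasBoundedPartialSums_re_mul_pow (A ^ 2 * conj (B ^ 2))
    (ζ := ζ₁ ^ 2 * conj (ζ₂ ^ 2)) (by simp [h₁, h₂])
    (mul_conj_ne_one (by simp [h₂]) h₁₂)).sub
    ((hasBoundedPartialSums_re_mul_pow (B ^ 2) hsq₂ h₂₂).const_mul (2 * normSq A))).sub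
    ((hasBoundedPartialSums_re_mul_pow (A ^ 2) hsq₁ h₁₁).const_mul (2 * normSq B))).div_const 8
  refine hsum.exists_pos_of_add_le_sq (M := ‖A‖ * ‖B‖) (fun k => ?_) hosc
    (c := normSq A * normSq B / 8)
    (by have := normSq_pos.2 hA; have := normSq_pos.2 hB; positivity) (fun k => ?_)
  · rw [abs_mul]
    gcongr
    · exact (abs_im_le_norm _).trans (by simp [h₁])
    · exact (abs_im_le_norm _).trans (by simp [h₂])
  · have := sq_im_mul_im_ge (A * ζ₁ ^ k) (B * ζ₂ ^ k)
    rw [normSq_mul_pow_of_norm_eq_one A h₁, normSq_mul_pow_of_norm_eq_one B h₂] at this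
    convert this using 1
    simp only [map_mul, map_pow]
    ring_nf

lemma exp_mul_I_ne_exp_mul_I {s t : ℝ} (hst : s < t) (hts : t - s < 2 * π) :
    cexp (s * I) ≠ cexp (t * I) := by
  intro h
  have hexp : cexp (↑(s - t) * I) = 1 := by
    rw [ofReal_sub, sub_mul, Complex.exp_sub, h, div_self (Complex.exp_ne_zero _)]
  have hcos := congrArg re hexp
  rw [exp_ofReal_mul_I_re, one_re] at hcos
  exact (sub_neg.2 hst).ne ((Real.cos_eq_one_iff_of_lt_of_lt (by linarith) (by linarith)).1 hcos)

lemma exp_mul_I_ne_one {t : ℝ} (ht : 0 < t) (ht' : t < 2 * π) : cexp (t * I) ≠ 1 := by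
  simpa using (exp_mul_I_ne_exp_mul_I ht (by simpa using ht')).symm

lemma sameOrOppositeQuadrant_of_pos {z w : ℂ} (h : 0 < (z ^ 2).im * (w ^ 2).im) :
    SameOrOppositeQuadrant z w := by
  have hprod : (z ^ 2).im * (w ^ 2).im = 4 * ((z.re * w.re) * (z.im * w.im)) := by
    simp only [sq, mul_im]
    ring
  rw [hprod] at h
  exact pos_and_pos_or_neg_and_neg_of_mul_pos (pos_of_mul_pos_right h (by norm_num))

lemma sq_exp_mul_I_mul (k : ℕ) (θ : ℝ) (f : ℂ) :
    (cexp ((k : ℝ) * θ * I) * f) ^ 2 = f ^ 2 * cexp (↑(2 * θ) * I) ^ k := by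
  rw [mul_pow, ← Complex.exp_nat_mul, ← Complex.exp_nat_mul]
  push_cast
  ring_nf

/-- Overtaking Lemma 4.3, first case: for `0 < θ₁ < θ₂ < π/2` and nonzero vectors
`f₁, f₂` off the coordinate axes, some simultaneous rotation `R(kθ₁)f₁`, `R(kθ₂)f₂`
puts them in the same open quadrant or in diametrically opposite ones. -/
theorem stmt8 (θ₁ θ₂ : ℝ) (h1 : 0 < θ₁) (h2 : θ₁ < θ₂) (h3 : θ₂ < π / 2)
    (f₁ f₂ : ℂ) (hf₁ : f₁.re ≠ 0 ∧ f₁.im ≠ 0) (hf₂ : f₂.re ≠ 0 ∧ f₂.im ≠ 0) :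
    ∃ k : ℕ, SameOrOppositeQuadrant (Complex.exp ((k : ℝ) * θ₁ * Complex.I) * f₁)
      (Complex.exp ((k : ℝ) * θ₂ * Complex.I) * f₂) := by
  have hsq : ∀ θ : ℝ, cexp (↑(2 * θ) * I) ^ 2 = cexp (↑(4 * θ) * I) := fun θ => by
    rw [← Complex.exp_nat_mul]; push_cast; ring_nf
  have hζ₁ : cexp (↑(2 * θ₁) * I) ^ 2 ≠ 1 := by
    rw [hsq]; exact exp_mul_I_ne_one (by positivity) (by linarith)
  have hζ₂ : cexp (↑(2 * θ₂) * I) ^ 2 ≠ 1 := by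
    rw [hsq]; exact exp_mul_I_ne_one (by linarith) (by linarith)
  have hζ₁₂ : cexp (↑(2 * θ₁) * I) ^ 2 ≠ cexp (↑(2 * θ₂) * I) ^ 2 := by
    rw [hsq, hsq]; exact exp_mul_I_ne_exp_mul_I (by linarith) (by linarith)
  have hζ₁ζ₂ : cexp (↑(2 * θ₁) * I) * cexp (↑(2 * θ₂) * I) ≠ 1 := by
    rw [← Complex.exp_add, ← add_mul, ← ofReal_add]
    exact exp_mul_I_ne_one (by linarith) (by linarith)
  have hf₁0 : f₁ ≠ 0 := fun h => hf₁.1 (by simp [h])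
  have hf₂0 : f₂ ≠ 0 := fun h => hf₂.1 (by simp [h])
  obtain ⟨k, hk⟩ := exists_im_mul_im_pos (norm_exp_ofReal_mul_I _) (norm_exp_ofReal_mul_I _)
    hζ₁ hζ₂ hζ₁₂ hζ₁ζ₂ (pow_ne_zero 2 hf₁0) (pow_ne_zero 2 hf₂0)
  exact ⟨k, sameOrOppositeQuadrant_of_pos (by rwa [sq_exp_mul_I_mul, sq_exp_mul_I_mul])⟩
end

section
/- Let π/2 < θ₁ < θ₂ < π. For any two nonzero vectors f₁, f₂ ∈ ℝ² not lying on the coordinate axes, there exists k ∈ ℕ such that R(kθ₁)f₁ and R(kθ₂)f₂ lie in the same open quadrant or in diametrically opposite open quadrants. -/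
open Real

/-!
Since `re z * im z = im (z ^ 2) / 2`, it suffices to find `k` for which
`sin (2 * (k * θ₁ + arg f₁))` and `sin (2 * (k * θ₂ + arg f₂))` have the same nonzero sign.
If their product were `≤ 0` for every `k`, its negative, a difference of two cosines with
frequencies `2 * (θ₁ ± θ₂) ∉ 2πℤ` and hence with bounded partial sums, would be summable, so the
product would tend to `0`. From some `k` on, one of the two angles is then close to `πℤ` at every
step. As neither `2 * θⱼ` is close to `πℤ`, the same angle is never close twice in a row, so the
two alternate; two steps apart this makes both `4 * θ₁` and `4 * θ₂` close to `πℤ`, impossible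
for two distinct numbers in `(2π, 4π)`.

Distances to `ℤ` are measured by the norm of `UnitAddCircle`.
-/

open Filter Topology

namespace UnitAddCircle

theorem norm_coe_eq_zero_iff {x : ℝ} : ‖(x : UnitAddCircle)‖ = 0 ↔ ∃ n : ℤ, x = n := by
  rw [norm_eq_zero, AddCircle.coe_eq_zero_iff]
  simp [eq_comm]

theorem two_mul_norm_coe_le_abs_sin_pi_mul (x : ℝ) :
    2 * ‖(x : UnitAddCircle)‖ ≤ |sin (π * x)| := by
  have hπ := pi_pos
  have hround : |sin (π * x)| = |sin (π * (x - round x))| := by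
    rw [mul_sub, mul_comm π (round x : ℝ), sin_sub_int_mul_pi, abs_mul, abs_neg_one_zpow,
      one_mul]
  have habs : |π * (x - round x)| = π * |x - round x| := by rw [abs_mul, abs_of_pos hπ]
  have hjordan := mul_abs_le_abs_sin (x := π * (x - round x))
    (by rw [habs]; nlinarith [abs_sub_round x])
  rw [norm_eq, hround]
  calc 2 * |x - round x| = 2 / π * |π * (x - round x)| := by rw [habs]; field_simp
    _ ≤ _ := hjordan

theorem norm_coe_natCast_mul_lt {s b ε : ℝ} {k j : ℕ}
    (hk : ‖((s - k * b : ℝ) : UnitAddCircle)‖ < ε)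
    (hkj : ‖((s - (k + j : ℕ) * b : ℝ) : UnitAddCircle)‖ < ε) :
    ‖((j * b : ℝ) : UnitAddCircle)‖ < 2 * ε := by
  have hdiff : ((j * b : ℝ) : UnitAddCircle) =
      ((s - k * b : ℝ) : UnitAddCircle) - ((s - (k + j : ℕ) * b : ℝ) : UnitAddCircle) := by
    rw [← AddCircle.coe_sub]
    congr 1
    push_cast
    ring
  rw [hdiff]
  exact (norm_sub_le _ _).trans_lt (by linarith)

theorem norm_coe_pos_of_mem_Ioo {x : ℝ} (hx : x ∈ Set.Ioo 0 1) : 0 < ‖(x : UnitAddCircle)‖ := by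
  refine (norm_nonneg _).lt_of_ne' fun h ↦ ?_
  obtain ⟨n, rfl⟩ := norm_coe_eq_zero_iff.mp h
  have : (0 : ℤ) < n ∧ n < 1 := ⟨by exact_mod_cast hx.1, by exact_mod_cast hx.2⟩
  omega

end UnitAddCircle

theorem Complex.exp_ofReal_mul_I_ne_one {a : ℝ} (h₀ : a ≠ 0) (h : |a| < 2 * π) :
    Complex.exp (a * Complex.I) ≠ 1 := by
  rw [Ne, Complex.exp_eq_one_iff]
  rintro ⟨n, hn⟩
  have ha : a = n * (2 * π) := by
    have := congrArg Complex.im hn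
    simpa [mul_comm, mul_assoc] using this
  have hn0 : n = 0 := by
    rw [ha, abs_mul, abs_of_pos two_pi_pos] at h
    have : |(n : ℝ)| < 1 := by nlinarith [two_pi_pos]
    exact Int.abs_lt_one_iff.mp (by exact_mod_cast this)
  exact h₀ (by simp [ha, hn0])

theorem abs_sum_range_cos_add_mul_le {a : ℝ} (ha : Complex.exp (a * Complex.I) ≠ 1)
    (x : ℝ) (N : ℕ) :
    |∑ k ∈ Finset.range N, cos (x + k * a)| ≤ 2 / ‖Complex.exp (a * Complex.I) - 1‖ := by
  set z := Complex.exp (a * Complex.I)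
  have hz : ‖z‖ = 1 := Complex.norm_exp_ofReal_mul_I a
  have hterm (k : ℕ) : cos (x + k * a) = (Complex.exp (x * Complex.I) * z ^ k).re := by
    rw [← Complex.exp_nat_mul, ← Complex.exp_add, ← Complex.exp_ofReal_mul_I_re]
    push_cast
    ring_nf
  calc |∑ k ∈ Finset.range N, cos (x + k * a)|
      = |(Complex.exp (x * Complex.I) * ∑ k ∈ Finset.range N, z ^ k).re| := by
        simp only [hterm, Finset.mul_sum, Complex.re_sum]
    _ ≤ ‖Complex.exp (x * Complex.I) * ∑ k ∈ Finset.range N, z ^ k‖ := Complex.abs_re_le_norm _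
    _ = ‖z ^ N - 1‖ / ‖z - 1‖ := by
        rw [geom_sum_eq ha, norm_mul, Complex.norm_exp_ofReal_mul_I, one_mul, norm_div]
    _ ≤ 2 / ‖z - 1‖ := by
        gcongr
        calc ‖z ^ N - 1‖ ≤ ‖z ^ N‖ + ‖(1 : ℂ)‖ := norm_sub_le _ _
          _ = 2 := by rw [norm_pow, hz, one_pow, norm_one]; norm_num

theorem tendsto_sin_mul_sin_of_nonpos {x y a₁ a₂ : ℝ}
    (hadd : Complex.exp ((a₁ + a₂ : ℝ) * Complex.I) ≠ 1)
    (hsub : Complex.exp ((a₁ - a₂ : ℝ) * Complex.I) ≠ 1)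
    (h : ∀ k : ℕ, sin (x + k * a₁) * sin (y + k * a₂) ≤ 0) :
    Tendsto (fun k : ℕ ↦ sin (x + k * a₁) * sin (y + k * a₂)) atTop (𝓝 0) := by
  set g : ℕ → ℝ := fun k ↦ -(sin (x + k * a₁) * sin (y + k * a₂))
  have hg (k : ℕ) : g k =
      (cos (x + y + k * (a₁ + a₂)) - cos (x - y + k * (a₁ - a₂))) / 2 := by
    rw [show x + y + k * (a₁ + a₂) = (x + k * a₁) + (y + k * a₂) by ring,
      show x - y + k * (a₁ - a₂) = (x + k * a₁) - (y + k * a₂) by ring, cos_add, cos_sub]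
    ring
  have hsum (N : ℕ) : ∑ k ∈ Finset.range N, g k ≤
      (2 / ‖Complex.exp ((a₁ + a₂ : ℝ) * Complex.I) - 1‖ +
        2 / ‖Complex.exp ((a₁ - a₂ : ℝ) * Complex.I) - 1‖) / 2 := by
    have hadd' := abs_le.mp (abs_sum_range_cos_add_mul_le hadd (x + y) N)
    have hsub' := abs_le.mp (abs_sum_range_cos_add_mul_le hsub (x - y) N)
    simp only [hg, ← Finset.sum_div, Finset.sum_sub_distrib]
    linarith [hadd'.2, hsub'.1]
  have hg0 : Tendsto g atTop (𝓝 0) :=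
    (summable_of_sum_range_le (fun k ↦ neg_nonneg.mpr (h k)) hsum).tendsto_atTop_zero
  simpa [g] using hg0.neg

theorem eventually_norm_coe_lt_or_norm_coe_lt {x y : ℕ → ℝ}
    (h : Tendsto (fun k ↦ sin (π * x k) * sin (π * y k)) atTop (𝓝 0)) {ε : ℝ} (hε : 0 < ε) :
    ∀ᶠ k in atTop, ‖(x k : UnitAddCircle)‖ < ε ∨ ‖(y k : UnitAddCircle)‖ < ε := by
  have hsmall : ∀ᶠ k in atTop, |sin (π * x k) * sin (π * y k)| < 4 * ε ^ 2 := by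
    refine h.abs.eventually (gt_mem_nhds ?_)
    rw [abs_zero]
    positivity
  filter_upwards [hsmall] with k hk
  by_contra! hfar
  have hx := UnitAddCircle.two_mul_norm_coe_le_abs_sin_pi_mul (x k)
  have hy := UnitAddCircle.two_mul_norm_coe_le_abs_sin_pi_mul (y k)
  rw [abs_mul] at hk
  nlinarith [mul_le_mul hx hy (by positivity) (abs_nonneg _)]

theorem exists_and_add_two_of_forall_or {A B : ℕ → Prop} {N : ℕ}
    (hAB : ∀ k ≥ N, A k ∨ B k) (hA : ∀ k, A k → ¬A (k + 1)) (hB : ∀ k, B k → ¬B (k + 1)) :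
    ∃ k, A k ∧ A (k + 2) := by
  have hstep (k : ℕ) (hk : N ≤ k) (h : A k) : A (k + 2) :=
    (hAB (k + 2) (by omega)).resolve_right
      (hB (k + 1) ((hAB (k + 1) (by omega)).resolve_left (hA k h)))
  rcases hAB N le_rfl with h | h
  · exact ⟨N, h, hstep N le_rfl h⟩
  · have h' := (hAB (N + 1) (by omega)).resolve_right (hB N h)
    exact ⟨N + 1, h', hstep (N + 1) (by omega) h'⟩

theorem norm_coe_two_mul_lt_of_forall_or {s t b₁ b₂ ε : ℝ} {N : ℕ}
    (hb₁ : 2 * ε ≤ ‖(b₁ : UnitAddCircle)‖) (hb₂ : 2 * ε ≤ ‖(b₂ : UnitAddCircle)‖)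
    (h : ∀ k ≥ N, ‖((s - k * b₁ : ℝ) : UnitAddCircle)‖ < ε ∨
      ‖((t - k * b₂ : ℝ) : UnitAddCircle)‖ < ε) :
    ‖((2 * b₁ : ℝ) : UnitAddCircle)‖ < 2 * ε ∧ ‖((2 * b₂ : ℝ) : UnitAddCircle)‖ < 2 * ε := by
  have hstep {c b : ℝ} (hb : 2 * ε ≤ ‖(b : UnitAddCircle)‖) (k : ℕ)
      (hk : ‖((c - k * b : ℝ) : UnitAddCircle)‖ < ε) :
      ¬‖((c - (k + 1 : ℕ) * b : ℝ) : UnitAddCircle)‖ < ε := fun hk' ↦ by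
    have := UnitAddCircle.norm_coe_natCast_mul_lt hk hk'
    rw [Nat.cast_one, one_mul] at this
    linarith
  obtain ⟨k, hk, hk₂⟩ := exists_and_add_two_of_forall_or h (hstep hb₁) (hstep hb₂)
  obtain ⟨l, hl, hl₂⟩ :=
    exists_and_add_two_of_forall_or (fun k hk ↦ (h k hk).symm) (hstep hb₂) (hstep hb₁)
  have h₁ := UnitAddCircle.norm_coe_natCast_mul_lt hk hk₂
  have h₂ := UnitAddCircle.norm_coe_natCast_mul_lt hl hl₂
  rw [Nat.cast_ofNat] at h₁ h₂
  exact ⟨h₁, h₂⟩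

theorem exists_sin_mul_sin_pos {b₁ b₂ : ℝ} (hb₁ : b₁ ∈ Set.Ioo 0 1) (hb₂ : b₂ ∈ Set.Ioo 0 1)
    (hb : b₁ ≠ b₂) (s t : ℝ) :
    ∃ k : ℕ, 0 < sin (π * (s - k * b₁)) * sin (π * (t - k * b₂)) := by
  by_contra! hnonpos
  have hπ := pi_pos
  have hlim : Tendsto (fun k : ℕ ↦ sin (π * (s - k * b₁)) * sin (π * (t - k * b₂)))
      atTop (𝓝 0) := by
    have hadd : Complex.exp ((-(π * b₁) + -(π * b₂) : ℝ) * Complex.I) ≠ 1 :=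
      Complex.exp_ofReal_mul_I_ne_one (by nlinarith [hb₁.1, hb₂.1])
        (by rw [abs_lt]; constructor <;> nlinarith [hb₁.1, hb₂.1, hb₁.2, hb₂.2])
    have hsub : Complex.exp ((-(π * b₁) - -(π * b₂) : ℝ) * Complex.I) ≠ 1 :=
      Complex.exp_ofReal_mul_I_ne_one (by rw [sub_ne_zero]; simpa [hπ.ne'] using hb)
        (by rw [abs_lt]; constructor <;> nlinarith [hb₁.1, hb₂.1, hb₁.2, hb₂.2])
    have hrw (k : ℕ) (c b : ℝ) : π * (c - k * b) = π * c + k * -(π * b) := by ring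
    simp only [hrw] at hnonpos ⊢
    exact tendsto_sin_mul_sin_of_nonpos hadd hsub hnonpos
  -- `2 * b₁` and `2 * b₂` lie in `(0, 2)` and are distinct, so they are not both integers
  have hdouble : 0 < max ‖((2 * b₁ : ℝ) : UnitAddCircle)‖ ‖((2 * b₂ : ℝ) : UnitAddCircle)‖ := by
    by_contra! h
    obtain ⟨m, hm⟩ := UnitAddCircle.norm_coe_eq_zero_iff.mp
      (le_antisymm ((le_max_left _ _).trans h) (norm_nonneg _))
    obtain ⟨n, hn⟩ := UnitAddCircle.norm_coe_eq_zero_iff.mp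
      (le_antisymm ((le_max_right _ _).trans h) (norm_nonneg _))
    have hmn : (0 : ℝ) < m ∧ (m : ℝ) < 2 ∧ (0 : ℝ) < n ∧ (n : ℝ) < 2 := by
      rw [← hm, ← hn]
      refine ⟨?_, ?_, ?_, ?_⟩ <;> linarith [hb₁.1, hb₂.1, hb₁.2, hb₂.2]
    norm_cast at hmn
    obtain rfl : m = n := by omega
    exact hb (by linarith)
  set d₁ := ‖(b₁ : UnitAddCircle)‖
  set d₂ := ‖(b₂ : UnitAddCircle)‖
  set e := max ‖((2 * b₁ : ℝ) : UnitAddCircle)‖ ‖((2 * b₂ : ℝ) : UnitAddCircle)‖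
  set ε := min (min d₁ d₂) e / 2 with hε
  have hε0 : 0 < ε := half_pos (lt_min (lt_min (UnitAddCircle.norm_coe_pos_of_mem_Ioo hb₁)
    (UnitAddCircle.norm_coe_pos_of_mem_Ioo hb₂)) hdouble)
  have hε₁ : 2 * ε ≤ d₁ := by linarith [min_le_left (min d₁ d₂) e, min_le_left d₁ d₂]
  have hε₂ : 2 * ε ≤ d₂ := by linarith [min_le_left (min d₁ d₂) e, min_le_right d₁ d₂]
  obtain ⟨N, hN⟩ := eventually_atTop.mp <| eventually_norm_coe_lt_or_norm_coe_lt
    (x := fun k ↦ s - k * b₁) (y := fun k ↦ t - k * b₂) hlim hε0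
  have h₁₂ := norm_coe_two_mul_lt_of_forall_or hε₁ hε₂ hN
  linarith [max_lt h₁₂.1 h₁₂.2, min_le_right (min d₁ d₂) e]

theorem sameOrOppositeQuadrant_iff {z w : ℂ} :
    SameOrOppositeQuadrant z w ↔ 0 < z.re * z.im * (w.re * w.im) := by
  rw [mul_mul_mul_comm]
  exact mul_pos_iff.symm

theorem re_mul_im_exp_mul_I_mul (x : ℝ) (f : ℂ) :
    (Complex.exp (x * Complex.I) * f).re * (Complex.exp (x * Complex.I) * f).im =
      ‖f‖ ^ 2 / 2 * sin (2 * (x + f.arg)) := by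
  have hpolar : Complex.exp (x * Complex.I) * f =
      ‖f‖ * Complex.exp ((x + f.arg : ℝ) * Complex.I) := by
    conv_lhs => rw [← Complex.norm_mul_exp_arg_mul_I f]
    rw [mul_left_comm, ← Complex.exp_add]
    push_cast
    ring_nf
  rw [hpolar, Complex.re_ofReal_mul, Complex.im_ofReal_mul, Complex.exp_ofReal_mul_I_re,
    Complex.exp_ofReal_mul_I_im, sin_two_mul]
  ring

theorem two_sub_two_mul_div_pi_mem_Ioo {θ : ℝ} (h₁ : π / 2 < θ) (h₂ : θ < π) :
    2 - 2 * θ / π ∈ Set.Ioo 0 1 := by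
  constructor
  · rw [sub_pos, div_lt_iff₀ pi_pos]; linarith
  · rw [sub_lt_comm, lt_div_iff₀ pi_pos]; linarith

theorem sin_two_mul_natCast_mul_add (k : ℕ) (θ α : ℝ) :
    sin (2 * (k * θ + α)) = sin (π * (2 * α / π - k * (2 - 2 * θ / π))) := by
  rw [← sin_sub_nat_mul_two_pi _ k]
  congr 1
  field_simp
  ring

/-- Overtaking Lemma 4.3, second case: for `π/2 < θ₁ < θ₂ < π` and nonzero vectors
`f₁, f₂` off the coordinate axes, some simultaneous rotation `R(kθ₁)f₁`, `R(kθ₂)f₂`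
puts them in the same open quadrant or in diametrically opposite ones. -/
theorem stmt9 (θ₁ θ₂ : ℝ) (h1 : π / 2 < θ₁) (h2 : θ₁ < θ₂) (h3 : θ₂ < π)
    (f₁ f₂ : ℂ) (hf₁ : f₁.re ≠ 0 ∧ f₁.im ≠ 0) (hf₂ : f₂.re ≠ 0 ∧ f₂.im ≠ 0) :
    ∃ k : ℕ, SameOrOppositeQuadrant (Complex.exp ((k : ℝ) * θ₁ * Complex.I) * f₁)
      (Complex.exp ((k : ℝ) * θ₂ * Complex.I) * f₂) := by
  have hb₁₂ : 2 - 2 * θ₁ / π ≠ 2 - 2 * θ₂ / π := by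
    intro h
    field_simp at h
    linarith
  obtain ⟨k, hk⟩ := exists_sin_mul_sin_pos (two_sub_two_mul_div_pi_mem_Ioo h1 (h2.trans h3))
    (two_sub_two_mul_div_pi_mem_Ioo (h1.trans h2) h3) hb₁₂ (2 * f₁.arg / π) (2 * f₂.arg / π)
  have hnorm (f : ℂ) (hf : f.re ≠ 0) : 0 < ‖f‖ ^ 2 / 2 := by
    have : f ≠ 0 := fun h ↦ hf (by simp [h])
    positivity
  refine ⟨k, sameOrOppositeQuadrant_iff.mpr ?_⟩
  rw [← Complex.ofReal_mul, ← Complex.ofReal_mul, re_mul_im_exp_mul_I_mul,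
    re_mul_im_exp_mul_I_mul, sin_two_mul_natCast_mul_add, sin_two_mul_natCast_mul_add,
    mul_mul_mul_comm]
  exact mul_pos (mul_pos (hnorm f₁ hf₁.1) (hnorm f₂ hf₂.1)) hk
end
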